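/- The eigenvalue λ_{k,q}^{(α,n)} of the (α,q)-Bernstein operator admits the product representation λ_{k,q}^{(α,n)} = (α + (1-α)·[n-k]_q[n+k-1]_q/([n]_q[n-1]_q)) · Π_{m=1}^{k-1} (1 - [m]_q/[n]_q) for 2 ≤ k ≤ n. -/

import Mathlib

open Finset Filter Topology

/-- The q-integer `[m]_q = 1 + q + ... + q^{m-1}`, with `[0]_q = 0`. -/
noncomputable def qInt (q : ℝ) (m : ℕ) : ℝ := ∑ i ∈ Finset.range m, q ^ i

/-- The q-factorial `[n]_q! = [1]_q [2]_q ⋯ [n]_q`. -/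
noncomputable def qFact (q : ℝ) (n : ℕ) : ℝ := ∏ i ∈ Finset.range n, qInt q (i + 1)

/-- The q-binomial coefficient `[n]_q!/([k]_q! [n-k]_q!)` (zero if `k > n`). -/
noncomputable def qBinom (q : ℝ) (n k : ℕ) : ℝ :=
  if k ≤ n then qFact q n / (qFact q k * qFact q (n - k)) else 0

/-- The q-Stirling number of the second kind. -/
noncomputable def qStirling (q : ℝ) (k r : ℕ) : ℝ :=
  (1 / (qFact q r * q ^ (r * (r - 1) / 2))) *
    ∑ i ∈ Finset.range (r + 1),
      (-1 : ℝ) ^ i * q ^ (i * (i - 1) / 2) * qBinom q r i * (qInt q (r - i)) ^ k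

/-- The q-forward difference operator on sequences:
`Δ_q^0 f_i = f_i`, `Δ_q^{r+1} f_i = Δ_q^r f_{i+1} - q^r Δ_q^r f_i`. -/
noncomputable def qDiff (q : ℝ) : ℕ → (ℕ → ℝ) → ℕ → ℝ
  | 0, f, i => f i
  | r + 1, f, i => qDiff q r f (i + 1) - q ^ r * qDiff q r f i

/-- The eigenvalues `λ_{k,q}^{(α,n)}` of the (α,q)-Bernstein operator. -/
noncomputable def lamEig (q α : ℝ) (n k : ℕ) : ℝ :=
  q ^ (k * (k - 1) / 2) * qFact q (n - 2) / (qFact q (n - k) * (qInt q n) ^ k) *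
    ((1 - α) * qInt q (n - k) * qInt q (n - 1 + k) + α * qInt q n * qInt q (n - 1))

/-- The coefficients `a_{n,q}(r,k)` of `T_{n,q,α}(t^k; x) = Σ_r a_{n,q}(r,k) x^r`. -/
noncomputable def aCoef (q α : ℝ) (n r k : ℕ) : ℝ :=
  q ^ (r * (r - 1) / 2) * qFact q (n - 2) / ((qInt q n) ^ k * qFact q (n - r)) *
    ((1 - α) * qInt q (n - r) *
        (qInt q (n + r - 1) * qStirling q (k + 1) (r + 1) -
          qInt q (r + 1) * qInt q (n - 1) * qStirling q k (r + 1)) +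
      α * qInt q n * qInt q (n - 1) * qStirling q k r)

/-- The (α,q)-Bernstein operator, via its forward-difference representation
`T_{n,q,α}(f;x) = Σ_{r=0}^n ((1-α) C_q(n-1,r) Δ_q^r g_0 + α C_q(n,r) Δ_q^r f_0) x^r`,
where `f_i = f([i]_q/[n]_q)` and
`g_i = (1 - q^{n-i-1}[i]_q/[n-1]_q) f_i + (q^{n-i-1}[i]_q/[n-1]_q) f_{i+1}`. -/
noncomputable def Talpha (q α : ℝ) (n : ℕ) (f : ℝ → ℝ) (x : ℝ) : ℝ :=
  let fs : ℕ → ℝ := fun i => f (qInt q i / qInt q n)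
  let gs : ℕ → ℝ := fun i =>
    (1 - q ^ (n - i - 1) * qInt q i / qInt q (n - 1)) * fs i +
      (q ^ (n - i - 1) * qInt q i / qInt q (n - 1)) * fs (i + 1)
  ∑ r ∈ Finset.range (n + 1),
    ((1 - α) * qBinom q (n - 1) r * qDiff q r gs 0 + α * qBinom q n r * qDiff q r fs 0) * x ^ r

/-!
Since `[n]_q = [m]_q + q^m [n-m]_q`, each factor `1 - [m]_q/[n]_q` equals `q^m [n-m]_q/[n]_q`, so the
product telescopes to `q^{k(k-1)/2} [n-1]_q! / ([n-k]_q! [n]_q^{k-1})`; with `[n-1]_q! = [n-2]_q! [n-1]_q`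
this is the prefactor of `λ_{k,q}^{(α,n)}` up to the factor `[n]_q [n-1]_q`.
-/

lemma qInt_pos {q : ℝ} (hq : 0 < q) {m : ℕ} (hm : m ≠ 0) : 0 < qInt q m :=
  Finset.sum_pos (fun i _ => pow_pos hq i) (Finset.nonempty_range_iff.mpr hm)

lemma qInt_add (q : ℝ) (m j : ℕ) : qInt q (m + j) = qInt q m + q ^ m * qInt q j := by
  simp only [qInt, Finset.sum_range_add, Finset.mul_sum, pow_add]

lemma qFact_succ (q : ℝ) (n : ℕ) : qFact q (n + 1) = qFact q n * qInt q (n + 1) :=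
  Finset.prod_range_succ _ _

lemma qFact_pos {q : ℝ} (hq : 0 < q) (n : ℕ) : 0 < qFact q n :=
  Finset.prod_pos fun i _ => qInt_pos hq i.succ_ne_zero

lemma one_sub_qInt_div {q : ℝ} {m n : ℕ} (hn : qInt q n ≠ 0) (hmn : m ≤ n) :
    1 - qInt q m / qInt q n = q ^ m * qInt q (n - m) / qInt q n := by
  obtain ⟨j, rfl⟩ := Nat.exists_eq_add_of_le hmn
  rw [Nat.add_sub_cancel_left]
  rw [qInt_add] at hn ⊢
  field_simp
  ring

lemma prod_one_sub_qInt_div {q : ℝ} (hq : 0 < q) {n k : ℕ} (hk : 1 ≤ k) (hkn : k ≤ n) :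
    ∏ m ∈ Finset.Icc 1 (k - 1), (1 - qInt q m / qInt q n) =
      q ^ (k * (k - 1) / 2) * qFact q (n - 1) / (qFact q (n - k) * qInt q n ^ (k - 1)) := by
  have hn : 0 < qInt q n := qInt_pos hq (by omega)
  induction k, hk using Nat.le_induction with
  | base => simp [(qFact_pos hq (n - 1)).ne']
  | succ k hk ih =>
    obtain ⟨i, rfl⟩ : ∃ i, k = i + 1 := ⟨k - 1, by omega⟩
    obtain ⟨r, hr⟩ : ∃ r, n - (i + 1) = r + 1 := ⟨n - (i + 2), by omega⟩
    have hr' : n - (i + 1 + 1) = r := by omega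
    have hF : 0 < qFact q r := qFact_pos hq r
    have hqr : 0 < qInt q (r + 1) := qInt_pos hq r.succ_ne_zero
    rw [Nat.triangle_succ]
    simp only [Nat.add_sub_cancel] at ih ⊢
    rw [Finset.prod_Icc_succ_top (by omega), ih (by omega), one_sub_qInt_div hn.ne' (by omega),
      hr, hr', qFact_succ]
    field_simp
    ring

theorem lamEig_prod_rep_general (q α : ℝ) (hq : 0 < q)
    (n k : ℕ) (hk : 2 ≤ k) (hkn : k ≤ n) :
    lamEig q α n k =
      (α + (1 - α) * qInt q (n - k) * qInt q (n + k - 1) / (qInt q n * qInt q (n - 1))) *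
        ∏ m ∈ Finset.Icc 1 (k - 1), (1 - qInt q m / qInt q n) := by
  rw [prod_one_sub_qInt_div hq (by omega) hkn]
  obtain ⟨p, rfl⟩ : ∃ p, n = p + 2 := ⟨n - 2, by omega⟩
  have hn : 0 < qInt q (p + 2) := qInt_pos hq (by omega)
  have hn1 : 0 < qInt q (p + 1) := qInt_pos hq (by omega)
  have hF : 0 < qFact q (p + 2 - k) := qFact_pos hq _
  have hF2 : 0 < qFact q p := qFact_pos hq _
  have hpow : qInt q (p + 2) ^ k = qInt q (p + 2) ^ (k - 1) * qInt q (p + 2) := by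
    rw [← pow_succ, Nat.sub_add_cancel (by omega)]
  simp only [lamEig, show p + 2 - 1 = p + 1 by omega, show p + 2 - 2 = p by omega,
    show p + 1 + k = p + 2 + k - 1 by omega, qFact_succ, hpow]
  field_simp
  ring

theorem lamEig_prod_rep (q α : ℝ) (hq : 0 < q) (hα : α ∈ Set.Icc (0 : ℝ) 1)
    (n k : ℕ) (hk : 2 ≤ k) (hkn : k ≤ n) :
    lamEig q α n k =
      (α + (1 - α) * qInt q (n - k) * qInt q (n + k - 1) / (qInt q n * qInt q (n - 1))) *
        ∏ m ∈ Finset.Icc 1 (k - 1), (1 - qInt q m / qInt q n) :=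
  lamEig_prod_rep_general q α hq n k hk hkn
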